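/- Regularization bias bounds under a source condition: Let T be a self-adjoint positive bounded operator on a Hilbert space H with ‖T‖ ≤ κ, let g = T α₀ for α₀ ∈ H, and suppose α₀ = T^{(c−1)/2} f for some f ∈ H and c ∈ [1,2]. Define α_λ = (T + λ)^{−1} g. Then ‖T^{1/2}(α_λ − α₀)‖²_H ≤ λ^c ‖f‖²_H and ‖α_λ − α₀‖²_H ≤ λ^{c−1} ‖f‖²_H. -/

import Mathlib

/-!
In the eigenbasis of `T` the bias `α_λ - α₀` has coefficients `-λ/(t+λ) ⟪bⱼ, α₀⟫`, so by the
source condition its squared coefficients are `λ² t^(c-1)/(t+λ)² ⟪bⱼ, f⟫²`, weighted by a further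
factor `t` for the `T^{1/2}`-norm. The scalar inequality `λ² t^p/(t+λ)² ≤ λ^p` for `0 ≤ p ≤ 2`,
applied with `p = c - 1` and `p = c`, bounds every coefficient, and Parseval sums the bounds.
-/

open scoped RealInnerProductSpace

lemma sq_mul_rpow_div_add_sq_le {t lam p : ℝ} (ht : 0 ≤ t) (hlam : 0 < lam) (hp0 : 0 ≤ p)
    (hp2 : p ≤ 2) : lam ^ 2 * t ^ p / (t + lam) ^ 2 ≤ lam ^ p := by
  have htl : 0 < t + lam := by linarith
  calc lam ^ 2 * t ^ p / (t + lam) ^ 2 ≤ lam ^ 2 * (t + lam) ^ p / (t + lam) ^ 2 := by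
        gcongr
        linarith
    _ = lam ^ 2 * (t + lam) ^ (p - 2) := by
        rw [Real.rpow_sub htl, Real.rpow_two, mul_div_assoc]
    _ ≤ lam ^ 2 * lam ^ (p - 2) := by
        have hexp : (t + lam) ^ (p - 2) ≤ lam ^ (p - 2) :=
          Real.rpow_le_rpow_of_nonpos hlam (by linarith) (by linarith)
        gcongr
    _ = lam ^ p := by
        rw [← Real.rpow_two, ← Real.rpow_add hlam, add_sub_cancel]

namespace HilbertBasis

variable {ι H : Type*} [NormedAddCommGroup H] [InnerProductSpace ℝ H]

theorem hasSum_inner_sq (b : HilbertBasis ι ℝ H) (x : H) :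
    HasSum (fun i => ⟪b i, x⟫ ^ 2) (‖x‖ ^ 2) := by
  simpa only [sq, real_inner_comm x, real_inner_self_eq_norm_sq] using b.hasSum_inner_mul_inner x x

theorem tsum_le_mul_norm_sq (b : HilbertBasis ι ℝ H) {a : ι → ℝ} {C : ℝ} {x : H}
    (ha : ∀ i, 0 ≤ a i) (hle : ∀ i, a i ≤ C * ⟪b i, x⟫ ^ 2) : ∑' i, a i ≤ C * ‖x‖ ^ 2 := by
  have hbound : HasSum (fun i => C * ⟪b i, x⟫ ^ 2) (C * ‖x‖ ^ 2) := (b.hasSum_inner_sq x).mul_left C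
  exact hasSum_le hle (hbound.summable.of_nonneg_of_le ha hle).hasSum hbound

end HilbertBasis

/-- `b` is an eigenbasis of `T` with eigenvalues `t`; the hypotheses state `α₀ = T^{(c−1)/2} f` and
`α_λ = (T + λ)⁻¹ T α₀` coordinatewise, and the first sum is `‖T^{1/2}(α_λ − α₀)‖²`. -/
theorem stmt16_general {H : Type*} [NormedAddCommGroup H] [InnerProductSpace ℝ H]
    (b : HilbertBasis ℕ ℝ H) (t : ℕ → ℝ)
    (ht0 : ∀ j, 0 ≤ t j)
    (c : ℝ) (hc1 : 1 ≤ c) (hc2 : c ≤ 2)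
    (f α₀ : H)
    (hα₀ : ∀ j, ⟪b j, α₀⟫ = (t j) ^ ((c - 1) / 2) * ⟪b j, f⟫)
    (lam : ℝ) (hlam : 0 < lam)
    (αlam : H)
    (hαlam : ∀ j, ⟪b j, αlam⟫ = t j / (t j + lam) * ⟪b j, α₀⟫) :
    (∑' j : ℕ, t j * ⟪b j, αlam - α₀⟫ ^ 2) ≤ lam ^ c * ‖f‖ ^ 2
    ∧ ‖αlam - α₀‖ ^ 2 ≤ lam ^ (c - 1) * ‖f‖ ^ 2 := by
  have hcoef : ∀ j, ⟪b j, αlam - α₀⟫ ^ 2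
      = lam ^ 2 * t j ^ (c - 1) / (t j + lam) ^ 2 * ⟪b j, f⟫ ^ 2 := by
    intro j
    have htl : t j + lam ≠ 0 := by linarith [ht0 j]
    have hsq : (t j ^ ((c - 1) / 2)) ^ 2 = t j ^ (c - 1) := by
      rw [← Real.rpow_mul_natCast (ht0 j)]
      norm_num
    rw [inner_sub_right, hαlam j, hα₀ j, ← hsq]
    field_simp
    ring
  constructor
  · refine b.tsum_le_mul_norm_sq (fun j => mul_nonneg (ht0 j) (sq_nonneg _)) fun j => ?_
    have hpow : t j * t j ^ (c - 1) = t j ^ c := by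
      rw [mul_comm, ← Real.rpow_add_one' (ht0 j) (by linarith), sub_add_cancel]
    calc t j * ⟪b j, αlam - α₀⟫ ^ 2 = lam ^ 2 * t j ^ c / (t j + lam) ^ 2 * ⟪b j, f⟫ ^ 2 := by
          rw [hcoef, ← hpow]
          ring
      _ ≤ lam ^ c * ⟪b j, f⟫ ^ 2 := by
          gcongr
          exact sq_mul_rpow_div_add_sq_le (ht0 j) hlam (by linarith) hc2
  · rw [← (b.hasSum_inner_sq (αlam - α₀)).tsum_eq]
    refine b.tsum_le_mul_norm_sq (fun j => sq_nonneg _) fun j => ?_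
    rw [hcoef]
    gcongr
    exact sq_mul_rpow_div_add_sq_le (ht0 j) hlam (by linarith) (by linarith)

/-- Regularization bias bounds under a source condition, expressed spectrally: with
eigenvalues `tⱼ ≥ 0` of `T` (`‖T‖ ≤ κ`), source condition `⟪bⱼ,α₀⟫ = tⱼ^{(c−1)/2}⟪bⱼ,f⟫`
(i.e. `α₀ = T^{(c−1)/2} f`), and `α_λ = (T+λ)^{−1} T α₀` (i.e.
`⟪bⱼ,α_λ⟫ = tⱼ/(tⱼ+λ) ⟪bⱼ,α₀⟫`), one has
`‖T^{1/2}(α_λ−α₀)‖² = Σⱼ tⱼ ⟪bⱼ, α_λ−α₀⟫² ≤ λ^c ‖f‖²` and `‖α_λ−α₀‖² ≤ λ^{c−1} ‖f‖²`. -/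
theorem stmt16 {H : Type*} [NormedAddCommGroup H] [InnerProductSpace ℝ H] [CompleteSpace H]
    (b : HilbertBasis ℕ ℝ H) (t : ℕ → ℝ) (κ : ℝ)
    (ht0 : ∀ j, 0 ≤ t j) (htκ : ∀ j, t j ≤ κ)
    (c : ℝ) (hc1 : 1 ≤ c) (hc2 : c ≤ 2)
    (f α₀ : H)
    (hα₀ : ∀ j, ⟪b j, α₀⟫ = (t j) ^ ((c - 1) / 2) * ⟪b j, f⟫)
    (lam : ℝ) (hlam : 0 < lam)
    (αlam : H)
    (hαlam : ∀ j, ⟪b j, αlam⟫ = t j / (t j + lam) * ⟪b j, α₀⟫) :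
    (∑' j : ℕ, t j * ⟪b j, αlam - α₀⟫ ^ 2) ≤ lam ^ c * ‖f‖ ^ 2
    ∧ ‖αlam - α₀‖ ^ 2 ≤ lam ^ (c - 1) * ‖f‖ ^ 2 :=
  stmt16_general b t ht0 c hc1 hc2 f α₀ hα₀ lam hlam αlam hαlam
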